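/- Let H be a finite set, let (X_t)_{t≥1} be i.i.d. uniform draws from H, and let A, B ⊆ H be disjoint nonempty subsets. Then the probability that A is completely collected strictly before B is P(σ_A < σ_B) = |B| / (|A| + |B|). (In the first-to-complete scheme with two disjoint alignment sets of sizes m₁ and m₂, the probability of decoding via the size-m₁ set is (m₂ − 1)/((m₁ − 1) + (m₂ − 1)); e.g. for sizes (2,4) this gives 3/4 and 1/4, for (4,6) it gives 5/8 and 3/8, and for (4,8) it gives 7/10 and 3/10.) -/

import Mathlib

open MeasureTheory ProbabilityTheory

/-- The collection time `σ_A`: the smallest time `t ≥ 1` such that every element of `A`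
has appeared among `X_1, …, X_t` (with the convention `sInf ∅ = 0`). -/
noncomputable def collectTime {Ω H : Type*} (X : ℕ → Ω → H) (A : Set H) (ω : Ω) : ℕ :=
  sInf {t : ℕ | ∀ a ∈ A, ∃ s, 1 ≤ s ∧ s ≤ t ∧ X s ω = a}

/-!
Almost surely every element of `S = A ∪ B` appears, and then `σ_A < σ_B` exactly when the last
element of `S` to appear lies in `B`. Relabelling the values by a permutation of `H` does not
change the joint law of the i.i.d. uniform draws, so swapping two elements of `S` shows that each
of them is equally likely to be the last one to appear; hence each is last with probability
`1 / |S|`.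
-/

section Deterministic

variable {Ω H : Type*} {X : ℕ → Ω → H} {ω : Ω}

theorem collectTime_le_iff {A : Set H} (hA : A.Finite) (hX : ∀ a ∈ A, ∃ s, 1 ≤ s ∧ X s ω = a)
    {t : ℕ} : collectTime X A ω ≤ t ↔ ∀ a ∈ A, ∃ s, 1 ≤ s ∧ s ≤ t ∧ X s ω = a := by
  have hne : {t : ℕ | ∀ a ∈ A, ∃ s, 1 ≤ s ∧ s ≤ t ∧ X s ω = a}.Nonempty := by
    choose! s hs1 hsX using hX
    obtain ⟨N, hN⟩ := (hA.image s).bddAbove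
    exact ⟨N, fun a ha => ⟨s a, hs1 a ha, hN ⟨a, ha, rfl⟩, hsX a ha⟩⟩
  refine ⟨fun h a ha => ?_, fun h => Nat.sInf_le h⟩
  obtain ⟨s, hs1, hs, hsX⟩ := Nat.sInf_mem hne a ha
  exact ⟨s, hs1, hs.trans h, hsX⟩

theorem collectTime_singleton_le_iff {c : H} (hc : ∃ s, 1 ≤ s ∧ X s ω = c) {t : ℕ} :
    collectTime X {c} ω ≤ t ↔ ∃ s, 1 ≤ s ∧ s ≤ t ∧ X s ω = c := by
  simpa using collectTime_le_iff (Set.finite_singleton c) (by simpa using hc) (t := t)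

theorem apply_collectTime_singleton {c : H} (hc : ∃ s, 1 ≤ s ∧ X s ω = c) :
    X (collectTime X {c} ω) ω = c := by
  obtain ⟨s, hs1, hs, hsX⟩ := (collectTime_singleton_le_iff hc).1 le_rfl
  have hle : collectTime X {c} ω ≤ s := (collectTime_singleton_le_iff hc).2 ⟨s, hs1, le_rfl, hsX⟩
  rwa [hle.antisymm hs]

theorem injOn_collectTime_singleton :
    Set.InjOn (fun c => collectTime X {c} ω) {c | ∃ s, 1 ≤ s ∧ X s ω = c} := by
  intro c hc c' hc' h
  rw [← apply_collectTime_singleton hc, ← apply_collectTime_singleton hc']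
  exact congrArg (X · ω) h

theorem collectTime_eq_sup (A : Finset H) (hX : ∀ a ∈ A, ∃ s, 1 ≤ s ∧ X s ω = a) :
    collectTime X A ω = A.sup fun a => collectTime X {a} ω := by
  refine eq_of_forall_ge_iff fun t => ?_
  rw [collectTime_le_iff A.finite_toSet hX, Finset.sup_le_iff]
  exact forall₂_congr fun a ha => (collectTime_singleton_le_iff (hX a ha)).symm

theorem collectTime_comp_injective {H' : Type*} {f : H → H'} (hf : f.Injective) (A : Set H) :
    collectTime (fun t ω => f (X t ω)) (f '' A) ω = collectTime X A ω := by
  simp only [collectTime, Set.forall_mem_image, hf.eq_iff]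

def lastToAppear (X : ℕ → Ω → H) (S : Set H) (b : H) : Set Ω :=
  {ω | (∀ c ∈ S, ∃ s, 1 ≤ s ∧ X s ω = c) ∧
    ∀ c ∈ S, c ≠ b → collectTime X {c} ω < collectTime X {b} ω}

theorem lastToAppear_comp_injective {H' : Type*} {f : H → H'} (hf : f.Injective) (S : Set H)
    (b : H) : lastToAppear (fun t ω => f (X t ω)) (f '' S) (f b) = lastToAppear X S b := by
  have hsingleton : ∀ c ω, collectTime (fun t ω => f (X t ω)) {f c} ω = collectTime X {c} ω :=
    fun c ω => by rw [← Set.image_singleton, collectTime_comp_injective hf]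
  ext ω
  simp only [lastToAppear, Set.mem_ofPred_eq, Set.forall_mem_image, hf.eq_iff, hf.ne_iff,
    hsingleton]

theorem pairwiseDisjoint_lastToAppear (S : Set H) : S.PairwiseDisjoint (lastToAppear X S) :=
  fun b hb b' hb' hne => Set.disjoint_left.2 fun _ hωb hωb' =>
    (hωb.2 b' hb' hne.symm).not_gt (hωb'.2 b hb hne)

theorem exists_mem_lastToAppear {S : Finset H} (hS : S.Nonempty)
    (hω : ∀ c ∈ S, ∃ s, 1 ≤ s ∧ X s ω = c) : ∃ b ∈ S, ω ∈ lastToAppear X S b := by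
  obtain ⟨b, hb, hmax⟩ := S.exists_max_image (fun c => collectTime X {c} ω) hS
  exact ⟨b, hb, hω, fun c hc hcb => (hmax c hc).lt_of_ne fun h =>
    hcb (injOn_collectTime_singleton (hω c hc) (hω b hb) h)⟩

theorem collectTime_lt_iff_exists_mem_lastToAppear [DecidableEq H] {A B : Finset H}
    (hA : A.Nonempty) (hB : B.Nonempty) (hAB : Disjoint A B)
    (hω : ∀ c ∈ A ∪ B, ∃ s, 1 ≤ s ∧ X s ω = c) :
    collectTime X A ω < collectTime X B ω ↔ ∃ b ∈ B, ω ∈ lastToAppear X ↑(A ∪ B) b := by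
  set f := fun c => collectTime X {c} ω
  have hωA : ∀ a ∈ A, ∃ s, 1 ≤ s ∧ X s ω = a := fun a ha => hω a (Finset.mem_union_left B ha)
  have hωB : ∀ b ∈ B, ∃ s, 1 ≤ s ∧ X s ω = b := fun b hb => hω b (Finset.mem_union_right A hb)
  rw [collectTime_eq_sup A hωA, collectTime_eq_sup B hωB]
  constructor
  · intro hlt
    obtain ⟨b, hb, hsup⟩ := B.exists_mem_eq_sup hB f
    refine ⟨b, hb, hω, fun c hc hcb => show f c < f b from ?_⟩
    rcases Finset.mem_union.1 hc with hcA | hcB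
    · exact hsup ▸ (A.le_sup (f := f) hcA).trans_lt hlt
    · exact (hsup ▸ B.le_sup (f := f) hcB).lt_of_ne fun h =>
        hcb (injOn_collectTime_singleton (hωB c hcB) (hωB b hb) h)
  · rintro ⟨b, hb, -, hlast⟩
    have hA_lt : ∀ a ∈ A, f a < f b := fun a ha =>
      hlast a (Finset.mem_union_left B ha) fun h => Finset.disjoint_left.1 hAB (h ▸ ha) hb
    obtain ⟨a, ha⟩ := hA
    exact ((Finset.sup_lt_iff ((Nat.zero_le _).trans_lt (hA_lt a ha))).2 hA_lt).trans_le
      (B.le_sup (f := f) hb)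

end Deterministic

section Measurability

variable {Ω H : Type*} [MeasurableSpace Ω]

theorem measurable_sInf_setOf {p : ℕ → Ω → Prop} (hp : ∀ t, Measurable (p t)) :
    Measurable fun ω => sInf {t | p t ω} := by
  classical
  -- Adding the event that `p` never holds changes nothing (`sInf ∅ = 0 = sInf univ`) and makes
  -- the set nonempty, so that its infimum becomes a `Nat.find`.
  have hex : ∀ ω, ∃ t, p t ω ∨ ∀ s, ¬ p s ω := fun ω =>
    (em (∃ t, p t ω)).elim (fun ⟨t, ht⟩ => ⟨t, .inl ht⟩) fun h => ⟨0, .inr (not_exists.1 h)⟩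
  have heq : ∀ ω, sInf {t | p t ω} = sInf {t | p t ω ∨ ∀ s, ¬ p s ω} := fun ω => by
    by_cases h : ∀ s, ¬ p s ω
    · simp [h]
    · simp only [h, or_false]
  rw [funext heq]
  convert measurable_find hex fun t => ((hp t).or (Measurable.forall fun s => (hp s).not)).setOf
    using 2 with ω
  convert Nat.sInf_def (hex ω) using 2 <;> rfl

variable [MeasurableSpace H] [MeasurableSingletonClass H] [Countable H] {X : ℕ → Ω → H}

theorem measurable_collectTime (hX : ∀ t, Measurable (X t)) (A : Set H) :
    Measurable (collectTime X A) :=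
  measurable_sInf_setOf fun t => by fun_prop

theorem measurableSet_lastToAppear (hX : ∀ t, Measurable (X t)) (S : Set H) (b : H) :
    MeasurableSet (lastToAppear X S b) := by
  have hτ := fun c => measurable_collectTime hX {c}
  exact Measurable.setOf (by fun_prop)

end Measurability

section Probability

variable {Ω H : Type*} [MeasurableSpace Ω] {μ : Measure Ω} [MeasurableSpace H] {X : ℕ → Ω → H}

theorem map_fun_eq_of_iIndepFun {Y : ℕ → Ω → H} (hX : ∀ t, Measurable (X t))
    (hY : ∀ t, Measurable (Y t)) (hXi : iIndepFun X μ) (hYi : iIndepFun Y μ)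
    (h : ∀ t, μ.map (X t) = μ.map (Y t)) :
    μ.map (fun ω t => X t ω) = μ.map (fun ω t => Y t ω) := by
  rw [hXi.map_fun_eq_infinitePi_map hX, hYi.map_fun_eq_infinitePi_map hY, funext h]

variable [MeasurableSingletonClass H]

theorem measure_lastToAppear_eq_of_map_eq [Countable H] {Y : ℕ → Ω → H}
    (hX : ∀ t, Measurable (X t)) (hY : ∀ t, Measurable (Y t))
    (h : μ.map (fun ω t => X t ω) = μ.map (fun ω t => Y t ω)) (S : Set H) (b : H) :
    μ (lastToAppear X S b) = μ (lastToAppear Y S b) := by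
  have hE := measurableSet_lastToAppear (X := fun t (x : ℕ → H) => x t) measurable_pi_apply S b
  change μ ((fun ω t => X t ω) ⁻¹' lastToAppear (fun t (x : ℕ → H) => x t) S b) =
    μ ((fun ω t => Y t ω) ⁻¹' lastToAppear (fun t (x : ℕ → H) => x t) S b)
  rw [← Measure.map_apply (measurable_pi_lambda _ hX) hE,
    ← Measure.map_apply (measurable_pi_lambda _ hY) hE, h]

variable [Fintype H]

theorem map_perm_eq_of_uniform (σ : Equiv.Perm H) {Z : Ω → H} (hZ : Measurable Z)
    (hunif : ∀ c : H, μ {ω | Z ω = c} = (Fintype.card H : ENNReal)⁻¹) :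
    μ.map (fun ω => σ (Z ω)) = μ.map Z := by
  refine Measure.ext_iff_singleton.2 fun c => ?_
  rw [Measure.map_apply (by fun_prop) (measurableSet_singleton c),
    Measure.map_apply hZ (measurableSet_singleton c)]
  have hpre : (fun ω => σ (Z ω)) ⁻¹' {c} = {ω | Z ω = σ.symm c} := by
    ext ω; simp [Equiv.eq_symm_apply]
  rw [hpre, hunif]
  exact (hunif c).symm

theorem measure_lastToAppear_image_perm (hX : ∀ t, Measurable (X t)) (hindep : iIndepFun X μ)
    (hunif : ∀ t, ∀ c : H, μ {ω | X t ω = c} = (Fintype.card H : ENNReal)⁻¹)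
    (σ : Equiv.Perm H) (S : Set H) (b : H) :
    μ (lastToAppear X (σ '' S) (σ b)) = μ (lastToAppear X S b) := by
  have hσX : ∀ t, Measurable fun ω => σ (X t ω) := fun t => by fun_prop
  have hlaw := map_fun_eq_of_iIndepFun hX hσX hindep
    (hindep.comp (fun _ => σ) fun _ => by fun_prop)
    fun t => (map_perm_eq_of_uniform σ (hX t) (hunif t)).symm
  rw [← lastToAppear_comp_injective σ.injective S b]
  exact measure_lastToAppear_eq_of_map_eq hX hσX hlaw _ _

theorem measure_lastToAppear_eq_of_mem (hX : ∀ t, Measurable (X t)) (hindep : iIndepFun X μ)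
    (hunif : ∀ t, ∀ c : H, μ {ω | X t ω = c} = (Fintype.card H : ENNReal)⁻¹)
    {S : Set H} {b b' : H} (hb : b ∈ S) (hb' : b' ∈ S) :
    μ (lastToAppear X S b) = μ (lastToAppear X S b') := by
  classical
  have h := measure_lastToAppear_image_perm hX hindep hunif (Equiv.swap b b') S b
  rw [(Equiv.swap_bijOn_self (iff_of_true hb hb')).image_eq, Equiv.swap_apply_left] at h
  exact h.symm

theorem ae_exists_eq [IsProbabilityMeasure μ] (hX : ∀ t, Measurable (X t))
    (hindep : iIndepFun X μ)
    (hunif : ∀ t, ∀ c : H, μ {ω | X t ω = c} = (Fintype.card H : ENNReal)⁻¹) (c : H) :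
    ∀ᵐ ω ∂μ, ∃ s, 1 ≤ s ∧ X s ω = c := by
  have hmeas : ∀ t, MeasurableSet {ω | X t ω = c} := fun t => hX t (measurableSet_singleton c)
  have hind : iIndepSet (fun t => {ω | X t ω = c}) μ := (iIndepSet_iff_meas_biInter hmeas).2
    fun s => hindep.measure_inter_preimage_eq_mul s fun _ _ => measurableSet_singleton c
  have hinf := measure_limsup_eq_one hmeas hind (by
    simp_rw [hunif]; exact ENNReal.tsum_const_eq_top_of_ne_zero (by simp))
  refine (ae_iff_prob_eq_one (by fun_prop)).2
    (le_antisymm prob_le_one (hinf ▸ measure_mono fun ω hω => ?_))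
  obtain ⟨s, hs, hXs⟩ := Filter.frequently_atTop.1 (Filter.mem_limsup_iff_frequently_mem.1 hω) 1
  exact ⟨s, hs, hXs⟩

theorem measure_lastToAppear [IsProbabilityMeasure μ] (hX : ∀ t, Measurable (X t))
    (hindep : iIndepFun X μ)
    (hunif : ∀ t, ∀ c : H, μ {ω | X t ω = c} = (Fintype.card H : ENNReal)⁻¹)
    {S : Finset H} {b : H} (hb : b ∈ S) :
    μ (lastToAppear X S b) = (S.card : ENNReal)⁻¹ := by
  have hcover : (⋃ c ∈ S, lastToAppear X S c) =ᵐ[μ] Set.univ := Filter.eventuallyEq_univ.2 <|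
    (ae_all_iff.2 (ae_exists_eq hX hindep hunif)).mono fun ω hω => by
      obtain ⟨c, hc, h⟩ := exists_mem_lastToAppear ⟨b, hb⟩ fun c _ => hω c
      exact Set.mem_biUnion hc h
  have hsum : ∑ c ∈ S, μ (lastToAppear X S c) = 1 := by
    rw [← measure_biUnion_finset (pairwiseDisjoint_lastToAppear _)
      fun c _ => measurableSet_lastToAppear hX _ c,
      measure_congr hcover, measure_univ]
  rw [Finset.sum_congr rfl fun c hc => measure_lastToAppear_eq_of_mem hX hindep hunif hc hb,
    Finset.sum_const, nsmul_eq_mul] at hsum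
  exact ENNReal.eq_inv_of_mul_eq_one_left ((mul_comm _ _).trans hsum)

end Probability

/-- For i.i.d. uniform draws from a finite set `H` and disjoint nonempty subsets
`A, B ⊆ H`, the probability that `A` is completely collected strictly before `B` is
`P(σ_A < σ_B) = |B| / (|A| + |B|)`.  (In the first-to-complete scheme with two disjoint
alignment sets of sizes `m₁` and `m₂` this gives, with `|A| = m₁ − 1` and `|B| = m₂ − 1`,
the decoding probability `(m₂−1)/((m₁−1)+(m₂−1))`.) -/
theorem prob_collect_first_of_disjoint
    {Ω : Type*} [MeasurableSpace Ω] (μ : Measure Ω) [IsProbabilityMeasure μ]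
    {H : Type*} [Fintype H] [MeasurableSpace H] [MeasurableSingletonClass H]
    (X : ℕ → Ω → H) (hmeas : ∀ t, Measurable (X t))
    (hindep : iIndepFun X μ)
    (hunif : ∀ t, ∀ c : H, μ {ω | X t ω = c} = (Fintype.card H : ENNReal)⁻¹)
    (A B : Finset H) (hA : A.Nonempty) (hB : B.Nonempty) (hAB : Disjoint A B) :
    μ {ω | collectTime X (A : Set H) ω < collectTime X (B : Set H) ω} =
      (B.card : ENNReal) / ((A.card : ENNReal) + (B.card : ENNReal)) := by
  classical
  have hcollected : ∀ᵐ ω ∂μ, ∀ c ∈ A ∪ B, ∃ s, 1 ≤ s ∧ X s ω = c :=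
    (ae_all_iff.2 (ae_exists_eq hmeas hindep hunif)).mono fun ω hω c _ => hω c
  have htarget : {ω | collectTime X (A : Set H) ω < collectTime X (B : Set H) ω}
      =ᵐ[μ] ⋃ b ∈ B, lastToAppear X ↑(A ∪ B) b :=
    Filter.eventuallyEq_set.2 (hcollected.mono fun ω hω => by
      simpa using collectTime_lt_iff_exists_mem_lastToAppear hA hB hAB hω)
  rw [measure_congr htarget, measure_biUnion_finset
      ((pairwiseDisjoint_lastToAppear _).subset (by simp))
      fun b _ => measurableSet_lastToAppear hmeas _ b,
    Finset.sum_congr rfl fun b hb =>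
      measure_lastToAppear hmeas hindep hunif (Finset.mem_union_right A hb),
    Finset.sum_const, nsmul_eq_mul, Finset.card_union_of_disjoint hAB, Nat.cast_add,
    div_eq_mul_inv]
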